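/- Let G be a directed graph with real arc lengths, no negative cycle, and unique shortest paths. Let S be a generic, independent set of weighted sites. Then for each site s ∈ S, the subgraph of G induced by the graphic Voronoi cell cell_G(s,S) is connected (every vertex of the cell is reachable from v_s within the cell). -/

import Mathlib

inductive DWalk {V : Type*} (A : V → V → Prop) : V → V → Type _ where
  | nil : (v : V) → DWalk A v v
  | cons : {u v w : V} → A u v → DWalk A v w → DWalk A u w

def DWalk.len {V : Type*} {A : V → V → Prop} (f : V → V → ℝ) :
    ∀ {u w : V}, DWalk A u w → ℝ
  | _, _, .nil _ => 0
  | u, _, .cons (v := v) _ p => f u v + DWalk.len f p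

def DWalk.support {V : Type*} {A : V → V → Prop} :
    ∀ {u w : V}, DWalk A u w → List V
  | u, _, .nil _ => [u]
  | u, _, .cons _ p => u :: DWalk.support p

def DWalk.lastArc {V : Type*} {A : V → V → Prop} :
    ∀ {u w : V}, DWalk A u w → Option (V × V)
  | _, _, .nil _ => none
  | u, _, .cons (v := v) _ p =>
      match DWalk.lastArc p with
      | none => some (u, v)
      | some pr => some pr

/-- Shortest-path distance: infimum of lengths of walks. -/
noncomputable def ddist {V : Type*} (A : V → V → Prop) (f : V → V → ℝ) (s t : V) : ℝ :=
  sInf {x : ℝ | ∃ p : DWalk A s t, DWalk.len f p = x}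


/-- The graphic Voronoi cell of a weighted site `s` with respect to a set of
weighted sites `S`. -/
def vorCell {V : Type*} (A : V → V → Prop) (f : V → V → ℝ)
    (S : Finset (V × ℝ)) (s : V × ℝ) : Set V :=
  {x | ∀ t ∈ S, t ≠ s → s.2 + ddist A f s.1 x ≤ t.2 + ddist A f t.1 x}

/-!
Take the shortest walk `p` from the site `v_s` to a vertex `x` of its cell. For a vertex `y`
on `p`, splitting `p` at `y` as `q ++ r` gives `d(v_s, y) ≤ len q = d(v_s, x) - len r`, while
for any other site `t` the triangle inequality through `y` gives
`d(v_t, x) ≤ d(v_t, y) + len r`. Hence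
`w_s + d(v_s, y) ≤ w_s + d(v_s, x) - len r ≤ w_t + d(v_t, x) - len r ≤ w_t + d(v_t, y)`,
so all of `p` stays in the cell. Without negative cycles every walk can be shortened to a
path, and there are finitely many paths, so the walk lengths are bounded below and `ddist`
is a genuine infimum.
-/

namespace DWalk

variable {V : Type*} {A : V → V → Prop} {f : V → V → ℝ}

def append : ∀ {a b c : V}, DWalk A a b → DWalk A b c → DWalk A a c
  | _, _, _, .nil _, q => q
  | _, _, _, .cons h p, q => .cons h (p.append q)

lemma len_append : ∀ {a b c : V} (p : DWalk A a b) (q : DWalk A b c),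
    (p.append q).len f = p.len f + q.len f
  | _, _, _, .nil _, q => by simp [append, len]
  | _, _, _, .cons h p, q => by simp [append, len, len_append p q, add_assoc]

lemma exists_split_of_mem_support : ∀ {a b : V} (p : DWalk A a b) {y : V}, y ∈ p.support →
    ∃ (q : DWalk A a y) (r : DWalk A y b),
      q.len f + r.len f = p.len f ∧ r.support <:+ p.support
  | _, _, .nil _, _, hy => by
      obtain rfl := List.mem_singleton.mp hy
      exact ⟨.nil _, .nil _, by simp [len], List.suffix_rfl⟩
  | _, _, .cons h p, _, hy => by
      rcases List.mem_cons.mp hy with rfl | hy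
      · exact ⟨.nil _, .cons h p, by simp [len], List.suffix_rfl⟩
      · obtain ⟨q, r, hlen, hsuf⟩ := exists_split_of_mem_support p hy
        exact ⟨.cons h q, r, by simp only [len]; linarith, hsuf.trans (List.suffix_cons _ _)⟩

lemma exists_nodup_len_le (hNoNeg : ∀ (v : V) (c : DWalk A v v), 0 ≤ c.len f) :
    ∀ {a b : V} (p : DWalk A a b), ∃ q : DWalk A a b, q.support.Nodup ∧ q.len f ≤ p.len f
  | _, _, .nil v => ⟨.nil v, by simp [support], le_rfl⟩
  | a, _, .cons h p => by
      obtain ⟨q, hnd, hle⟩ := exists_nodup_len_le hNoNeg p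
      by_cases ha : a ∈ q.support
      · obtain ⟨c, r, hlen, hsuf⟩ := exists_split_of_mem_support (f := f) q ha
        have hcycle : 0 ≤ (DWalk.cons h c).len f := hNoNeg a _
        simp only [len] at hcycle ⊢
        exact ⟨r, hsuf.sublist.nodup hnd, by linarith⟩
      · exact ⟨.cons h q, by simp [support, ha, hnd], by simp only [len]; linarith⟩

lemma head?_support : ∀ {a b : V} (p : DWalk A a b), p.support.head? = some a
  | _, _, .nil _ => rfl
  | _, _, .cons _ _ => rfl

lemma support_injective : ∀ {a b : V}, Function.Injective (support : DWalk A a b → List V)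
  | _, _, .nil _, .nil _, _ => rfl
  | _, _, .nil _, .cons _ q, hs => by
      cases q <;> simp [support] at hs
  | _, _, .cons _ p, .nil _, hs => by
      cases p <;> simp [support] at hs
  | _, _, .cons (v := v) _ p, .cons (v := v') _ q, hs => by
      obtain ⟨-, hs⟩ := List.cons.inj hs
      obtain rfl : v = v' := Option.some_injective _ <| by
        rw [← head?_support p, ← head?_support q, hs]
      rw [support_injective hs]

instance finite_nodup [Finite V] {a b : V} : Finite {p : DWalk A a b // p.support.Nodup} :=
  have := Fintype.ofFinite V
  Finite.of_injective (fun p => (⟨p.1.support, p.2⟩ : {l : List V // l.Nodup}))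
    fun _ _ h => Subtype.ext (support_injective (congrArg Subtype.val h))

lemma bddBelow_len [Finite V] (hNoNeg : ∀ (v : V) (c : DWalk A v v), 0 ≤ c.len f) {a b : V} :
    BddBelow (Set.range (len f : DWalk A a b → ℝ)) := by
  obtain ⟨m, hm⟩ := (Set.finite_range fun p : {p : DWalk A a b // p.support.Nodup} =>
    p.1.len f).bddBelow
  refine ⟨m, ?_⟩
  rintro _ ⟨p, rfl⟩
  obtain ⟨q, hnd, hle⟩ := exists_nodup_len_le hNoNeg p
  exact (hm ⟨⟨q, hnd⟩, rfl⟩).trans hle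

end DWalk

section Voronoi

variable {V : Type*} [Finite V] {A : V → V → Prop} {f : V → V → ℝ}

lemma ddist_le_len (hNoNeg : ∀ (v : V) (c : DWalk A v v), 0 ≤ c.len f)
    {a b : V} (p : DWalk A a b) : ddist A f a b ≤ p.len f :=
  csInf_le (DWalk.bddBelow_len hNoNeg) ⟨p, rfl⟩

lemma mem_vorCell_of_mem_support (hNoNeg : ∀ (v : V) (c : DWalk A v v), 0 ≤ c.len f)
    (hshortest : ∀ a b : V, ∃ p : DWalk A a b, p.len f = ddist A f a b)
    {S : Finset (V × ℝ)} {s : V × ℝ} {x y : V} (hx : x ∈ vorCell A f S s)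
    (p : DWalk A s.1 x) (hp : p.len f = ddist A f s.1 x) (hy : y ∈ p.support) :
    y ∈ vorCell A f S s := by
  intro t ht hts
  obtain ⟨q, r, hqr, -⟩ := DWalk.exists_split_of_mem_support (f := f) p hy
  obtain ⟨p', hp'⟩ := hshortest t.1 y
  have hsy : ddist A f s.1 y ≤ q.len f := ddist_le_len hNoNeg q
  have htx : ddist A f t.1 x ≤ ddist A f t.1 y + r.len f := by
    simpa only [DWalk.len_append, hp'] using ddist_le_len hNoNeg (p'.append r)
  linarith [hx t ht hts]

end Voronoi

theorem stmt6_general {V : Type*} [Fintype V] (A : V → V → Prop) (lam : V → V → ℝ)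
    (hNoNeg : ∀ (v : V) (c : DWalk A v v), 0 ≤ DWalk.len lam c)
    (huniq : ∀ a b : V, ∃! p : {q : DWalk A a b // (DWalk.support q).Nodup},
      DWalk.len lam p.1 = ddist A lam a b)
    (S : Finset (V × ℝ)) :
    ∀ s ∈ S, ∀ x ∈ vorCell A lam S s,
      ∃ p : DWalk A s.1 x, ∀ y ∈ DWalk.support p, y ∈ vorCell A lam S s := by
  have hshortest : ∀ a b : V, ∃ p : DWalk A a b, p.len lam = ddist A lam a b := fun a b =>
    let ⟨p, hp, _⟩ := huniq a b
    ⟨p.1, hp⟩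
  intro s _ x hx
  obtain ⟨p, hp⟩ := hshortest s.1 x
  exact ⟨p, fun y hy => mem_vorCell_of_mem_support hNoNeg hshortest hx p hp hy⟩

/-- for a generic, independent set of sites, each graphic Voronoi
cell induces a connected subgraph: every vertex of the cell is reachable from the
site by a directed path staying inside the cell. -/
theorem stmt6 {V : Type*} [Fintype V] (A : V → V → Prop) (lam : V → V → ℝ)
    (hNoNeg : ∀ (v : V) (c : DWalk A v v), 0 ≤ DWalk.len lam c)
    (huniq : ∀ a b : V, ∃! p : {q : DWalk A a b // (DWalk.support q).Nodup},
      DWalk.len lam p.1 = ddist A lam a b)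
    (S : Finset (V × ℝ))
    (hgen : ∀ x : V, ∀ s ∈ S, ∀ t ∈ S, s ≠ t →
      s.2 + ddist A lam s.1 x ≠ t.2 + ddist A lam t.1 x)
    (hind : ∀ s ∈ S, (vorCell A lam S s).Nonempty) :
    ∀ s ∈ S, ∀ x ∈ vorCell A lam S s,
      ∃ p : DWalk A s.1 x, ∀ y ∈ DWalk.support p, y ∈ vorCell A lam S s :=
  stmt6_general A lam hNoNeg huniq S
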